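/- arXiv:1611.07513 — 2 statements merged into one kernel-verified Lean document; each statement's English description precedes it below -/
import Mathlib

section
/- With Ĝ_n and t_n as in the binary-tree construction: Z(Ĝ_n) ≥ t_n + 1, and consequently Z(Ĝ_n) ≥ (4/9)·|V(Ĝ_n)|; more precisely Z(Ĝ_n) ≥ (4/9 + 1/(18·4^{n−1}))·|V(Ĝ_n)| for all n ≥ 1. -/
/-- The zero forcing closure: vertices that eventually become black when the
vertices of `S` are initially black and we repeatedly apply the rule that a
white vertex `u` becomes black if it is the unique white neighbor of some black
vertex `v` (we say `v` forces `u`). -/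
inductive ZFClosure {V : Type*} (G : SimpleGraph V) (S : Set V) : V → Prop
  | init (v : V) : v ∈ S → ZFClosure G S v
  | force (u v : V) : G.Adj v u → ZFClosure G S v →
      (∀ w, G.Adj v w → w ≠ u → ZFClosure G S w) → ZFClosure G S u

/-- `S` is a zero forcing set of `G` if every vertex eventually becomes black. -/
def IsZeroForcingSet {V : Type*} (G : SimpleGraph V) (S : Set V) : Prop :=
  ∀ v, ZFClosure G S v

/-- The zero forcing number `Z(G)`: the minimum cardinality of a zero forcing set. -/
noncomputable def zeroForcingNumber {V : Type*} (G : SimpleGraph V) : ℕ :=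
  sInf {k | ∃ S : Set V, S.ncard = k ∧ IsZeroForcingSet G S}

/-- One-sided edge relation of the subdivided `K₄`: vertices `a b c d e = 0 1 2 3 4`,
edges `ad, db, ac, cb, ae, eb, ce`; here `d = 3` is the subdivision vertex. -/
def subK4Rel : Fin 5 → Fin 5 → Prop := fun x y =>
  (x, y) ∈ [((0 : Fin 5), (3 : Fin 5)), (3, 1), (0, 2), (2, 1), (0, 4), (4, 1), (2, 4)]

/-- The subdivided `K₄`: the complete graph on `{a, b, c, e}` with the edge `ab`
replaced by the path `a–d–b`. -/
def subK4 : SimpleGraph (Fin 5) := SimpleGraph.fromRel subK4Rel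

/-- Vertices of the graph `G_{n+1}` of the binary-tree construction: `GV n` is
obtained from the complete binary tree `B_{2(n+1)-1}` by replacing every leaf with
a subdivided `K₄` (attached via its subdivision vertex `3`).  `GV 0` is a single
subdivided `K₄`; `GV (n+1)` consists of a root, two middle vertices `mid b`
(the vertices `y_n^1, y_n^2`), and four copies `child b c` of `GV n`. -/
inductive GV : ℕ → Type
  | base : Fin 5 → GV 0
  | root {n : ℕ} : GV (n + 1)
  | mid {n : ℕ} : Bool → GV (n + 1)
  | child {n : ℕ} : Bool → Bool → GV n → GV (n + 1)

/-- The root `r_{n+1}` of `G_{n+1}` (for a single subdivided `K₄` it is the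
subdivision vertex `3`). -/
def rootV : (n : ℕ) → GV n
  | 0 => .base 3
  | _ + 1 => .root

/-- One-sided edge relation of `G_{n+1}`: the root is joined to the two middle
vertices, each middle vertex is joined to the roots of its two copies of the
previous construction, and each copy keeps its own edges. -/
def gAdj : {n : ℕ} → GV n → GV n → Prop
  | 0, .base i, .base j => subK4Rel i j
  | _ + 1, .root, .mid _ => True
  | n + 1, .mid b, .child b' _ x => b = b' ∧ x = rootV n
  | _ + 1, .child b c x, .child b' c' y => b = b' ∧ c = c' ∧ gAdj x y
  | _ + 1, _, _ => False

/-- The graph `G_{n+1}` of the binary-tree construction (the complete binary tree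
`B_{2(n+1)-1}` with every leaf replaced by a subdivided `K₄`). -/
def Gtree (n : ℕ) : SimpleGraph (GV n) := SimpleGraph.fromRel gAdj

/-- One-sided edge relation of `Ĝ_{n+1}`: `G_{n+1}` together with one extra pendant
vertex `none` (the vertex `y_{n+1}`) attached to the root. -/
def hatAdj (n : ℕ) : Option (GV n) → Option (GV n) → Prop
  | some x, some y => gAdj x y
  | none, some x => x = rootV n
  | _, _ => False

/-- The graph `Ĝ_{n+1}`: `G_{n+1}` with a new pendant vertex attached to the root. -/
def hatGtree (n : ℕ) : SimpleGraph (Option (GV n)) := SimpleGraph.fromRel (hatAdj n)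

/-- The sequence `t_{n+1}` (0-indexed): `t 0 = t_1 = 2` and `t (n+1) = 4 * t n + 2`. -/
def tseq : ℕ → ℕ
  | 0 => 2
  | n + 1 => 4 * tseq n + 2


/-!
A zero forcing set meets every fort (a nonempty vertex set no outside vertex of which has
exactly one neighbour in it): the first vertex of a fort to turn black would be forced by a
black vertex outside the fort, which however has a second, still white, neighbour in it. So it
suffices to show that every `S` with `|S| ≤ t_n` misses a fort of `Ĝ_n`.

For `G_n` one proves by induction the two-part claim: if `|S| < t_n` then `S` misses a fort
avoiding the root, and if `|S| ≤ t_n` then `S` misses some fort. In `G_{n+1}` a root-avoiding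
fort of one of the four copies of `G_n` is already a fort; root-containing forts of the two
copies below the same middle vertex together form a root-avoiding fort; and root-containing
forts of two copies below different middle vertices form, with the root, a fort. Since
`t_{n+1} = 4 t_n + 2`, a count of how `S` is spread over the copies shows that one of these
cases always applies. Finally a fort of `G_n` is a fort of `Ĝ_n` once the pendant vertex is
added exactly when the fort contains the root.
-/

open SimpleGraph

section Forts

variable {V W : Type*} {G : SimpleGraph V} {H : SimpleGraph W} {F S : Set V}

def IsFort (G : SimpleGraph V) (F : Set V) : Prop :=
  F.Nonempty ∧ ∀ v ∉ F, ∀ u ∈ F, G.Adj v u → ∃ w ∈ F, w ≠ u ∧ G.Adj v w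

lemma ZFClosure.notMem_of_isFort (hF : IsFort G F) (hFS : Disjoint F S) {v : V}
    (hv : ZFClosure G S v) : v ∉ F := by
  induction hv with
  | init v hvS => exact fun hvF => hFS.notMem_of_mem_left hvF hvS
  | force u v hvu _ _ ihv ihw =>
    intro huF
    obtain ⟨w, hwF, hwu, hvw⟩ := hF.2 v ihv u huF hvu
    exact ihw w hvw hwu hwF

lemma IsZeroForcingSet.not_disjoint_of_isFort (hS : IsZeroForcingSet G S) (hF : IsFort G F) :
    ¬ Disjoint F S := fun hFS =>
  let ⟨v, hv⟩ := hF.1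
  (hS v).notMem_of_isFort hF hFS hv

lemma lt_zeroForcingNumber_of_exists_fort {k : ℕ}
    (h : ∀ S : Set V, S.ncard ≤ k → ∃ F, IsFort G F ∧ Disjoint F S) :
    k < zeroForcingNumber G := by
  refine Nat.lt_of_succ_le (le_csInf ⟨_, Set.univ, rfl, fun v => .init v trivial⟩ ?_)
  rintro _ ⟨S, rfl, hS⟩
  by_contra! hSk
  obtain ⟨F, hF, hFS⟩ := h S (Nat.le_of_lt_succ hSk)
  exact hS.not_disjoint_of_isFort hF hFS

lemma IsFort.image (e : G ≃g H) (hF : IsFort G F) : IsFort H (e '' F) := by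
  refine ⟨hF.1.image e, ?_⟩
  rintro v hv _ ⟨u, hu, rfl⟩ hvu
  obtain ⟨v, rfl⟩ := e.surjective v
  obtain ⟨w, hw, hwu, hvw⟩ := hF.2 v (fun h => hv ⟨v, h, rfl⟩) u hu (e.map_adj_iff.1 hvu)
  exact ⟨e w, ⟨w, hw, rfl⟩, e.injective.ne hwu, e.map_adj_iff.2 hvw⟩

end Forts

lemma Set.ncard_eq_sum_ite {α : Type*} [Fintype α] (S : Set α) [DecidablePred (· ∈ S)] :
    S.ncard = ∑ a, if a ∈ S then 1 else 0 := by
  rw [Finset.sum_boole, Set.ncard_eq_toFinset_card']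
  simp

open Classical in
lemma Set.ncard_preimage_some_add {α : Type*} [Fintype α] (S : Set (Option α)) :
    (some ⁻¹' S).ncard + (if none ∈ S then 1 else 0) = S.ncard := by
  rw [S.ncard_eq_sum_ite, Fintype.sum_option, Set.ncard_eq_sum_ite, add_comm]
  rfl

instance : DecidableRel subK4.Adj := fun x y => by
  unfold subK4 subK4Rel
  simp only [fromRel_adj]
  infer_instance

lemma subK4_exists_fort (S : Set (Fin 5)) :
    (S.ncard < 2 → ∃ F, IsFort subK4 F ∧ Disjoint F S ∧ 3 ∉ F) ∧
    (S.ncard ≤ 2 → ∃ F, IsFort subK4 F ∧ Disjoint F S) := by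
  have of_fort : ∀ F : Set (Fin 5), IsFort subK4 F → Disjoint F S → 3 ∉ F →
      (S.ncard < 2 → ∃ F, IsFort subK4 F ∧ Disjoint F S ∧ 3 ∉ F) ∧
      (S.ncard ≤ 2 → ∃ F, IsFort subK4 F ∧ Disjoint F S) :=
    fun F hF hFS h3 => ⟨fun _ => ⟨F, hF, hFS, h3⟩, fun _ => ⟨F, hF, hFS⟩⟩
  by_cases hS01 : Disjoint {0, 1} S
  · refine of_fort _ ⟨⟨0, by simp⟩, ?_⟩ hS01 (by simp)
    simp only [Set.mem_insert_iff, Set.mem_singleton_iff]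
    decide
  by_cases hS24 : Disjoint {2, 4} S
  · refine of_fort _ ⟨⟨2, by simp⟩, ?_⟩ hS24 (by simp)
    simp only [Set.mem_insert_iff, Set.mem_singleton_iff]
    decide
  obtain ⟨i, hi, hiS⟩ := Set.not_disjoint_iff.1 hS01
  obtain ⟨j, hj, hjS⟩ := Set.not_disjoint_iff.1 hS24
  simp only [Set.mem_insert_iff, Set.mem_singleton_iff] at hi hj
  have hij : i ≠ j := by rintro rfl; omega
  have hsub : {i, j} ⊆ S := Set.insert_subset hiS (Set.singleton_subset_iff.2 hjS)
  have hcard : 2 ≤ S.ncard := (Set.ncard_pair hij).ge.trans (Set.ncard_le_ncard hsub)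
  refine ⟨fun h => absurd h (by omega), fun h => ⟨{i, j}ᶜ, ⟨⟨3, by simp; omega⟩, ?_⟩, ?_⟩⟩
  · -- `S = {i, j}` is a transversal of `{0, 1}` and `{2, 4}`; its complement is a fort
    have key : ∀ i j : Fin 5, (i = 0 ∨ i = 1) → (j = 2 ∨ j = 4) → ∀ v, ¬ (v ≠ i ∧ v ≠ j) →
        ∀ u, (u ≠ i ∧ u ≠ j) → subK4.Adj v u → ∃ w, (w ≠ i ∧ w ≠ j) ∧ w ≠ u ∧ subK4.Adj v w := by
      decide
    simpa only [Set.mem_compl_iff, Set.mem_insert_iff, Set.mem_singleton_iff, not_or]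
      using key i j hi hj
  · rw [Set.disjoint_compl_left_iff_subset]
    exact (Set.eq_of_subset_of_ncard_le hsub (by rw [Set.ncard_pair hij]; exact h)).ge

namespace GV

def baseIso : subK4 ≃g Gtree 0 where
  toFun := base
  invFun := fun | base i => i
  left_inv _ := rfl
  right_inv := fun | base _ => rfl
  map_rel_iff' := by simp [Gtree, subK4, fromRel_adj, gAdj]

def equivSucc (n : ℕ) : GV (n + 1) ≃ Unit ⊕ Bool ⊕ Bool × Bool × GV n where
  toFun
    | root => .inl ()
    | mid b => .inr (.inl b)
    | child b c x => .inr (.inr (b, c, x))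
  invFun
    | .inl _ => root
    | .inr (.inl b) => mid b
    | .inr (.inr (b, c, x)) => child b c x
  left_inv x := by cases x <;> rfl
  right_inv x := by rcases x with _ | _ | _ <;> rfl

instance instFintype : (n : ℕ) → Fintype (GV n)
  | 0 => Fintype.ofEquiv _ baseIso.toEquiv
  | n + 1 => letI := instFintype n; Fintype.ofEquiv _ (equivSucc n).symm

lemma card_add_one (n : ℕ) : Fintype.card (GV n) + 1 = 6 * 4 ^ n := by
  induction n with
  | zero => rw [Fintype.card_congr baseIso.toEquiv.symm]; simp
  | succ n ih =>
    rw [Fintype.card_congr (equivSucc n)]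
    simp only [Fintype.card_sum, Fintype.card_prod, Fintype.card_unit, Fintype.card_bool]
    rw [pow_succ]
    omega

variable {n : ℕ}

lemma sum_univ_succ {M : Type*} [AddCommMonoid M] (f : GV (n + 1) → M) :
    ∑ v, f v = f root + ∑ b, f (mid b) + ∑ b, ∑ c, ∑ x, f (child b c x) := by
  rw [← (equivSucc n).symm.sum_comp]
  simp only [Fintype.sum_sum_type, Fintype.sum_prod_type, Fintype.univ_unit,
    Finset.sum_singleton, add_assoc]
  rfl

open Classical in
lemma sum_ncard_preimage_child_add_le (S : Set (GV (n + 1))) :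
    ∑ b, ∑ c, (child b c ⁻¹' S).ncard + (if root ∈ S then 1 else 0) ≤ S.ncard := by
  simp only [S.ncard_eq_sum_ite, sum_univ_succ, Set.ncard_eq_sum_ite (child _ _ ⁻¹' S),
    Set.mem_preimage]
  omega

def assemble (r : Prop) (F : Bool → Bool → Set (GV n)) : Set (GV (n + 1))
  | root => r
  | mid _ => False
  | child b c x => x ∈ F b c

end GV

open GV

variable {n : ℕ}

@[simp] lemma gtree_adj_root_mid {b : Bool} : (Gtree (n + 1)).Adj root (mid b) := by
  simp [Gtree, gAdj]

@[simp] lemma gtree_not_adj_root_child {b c : Bool} {x : GV n} :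
    ¬ (Gtree (n + 1)).Adj root (child b c x) := by
  simp [Gtree, gAdj]

@[simp] lemma gtree_adj_mid_child {b b' c : Bool} {x : GV n} :
    (Gtree (n + 1)).Adj (mid b) (child b' c x) ↔ b = b' ∧ x = rootV n := by
  simp [Gtree, gAdj]

@[simp] lemma gtree_adj_child_child {b b' c c' : Bool} {x y : GV n} :
    (Gtree (n + 1)).Adj (child b c x) (child b' c' y) ↔ b = b' ∧ c = c' ∧ (Gtree n).Adj x y := by
  simp [Gtree, gAdj]
  tauto

/-- `hr` and `hroot` say that no middle vertex has exactly one neighbour in the set. -/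
lemma isFort_assemble {r : Prop} {F : Bool → Bool → Set (GV n)}
    (hF : ∀ b c, (F b c).Nonempty → IsFort (Gtree n) (F b c))
    (hr : r → ∀ b, ∃ c, rootV n ∈ F b c)
    (hroot : ∀ b c, rootV n ∈ F b c → r ∨ rootV n ∈ F b (!c))
    (hne : (assemble r F).Nonempty) : IsFort (Gtree (n + 1)) (assemble r F) := by
  refine ⟨hne, fun v hv u hu hvu => ?_⟩
  cases v with
  | root =>
    cases u with
    | root => exact absurd hvu (Gtree _).irrefl
    | mid => exact hu.elim
    | child => exact absurd hvu gtree_not_adj_root_child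
  | mid b =>
    cases u with
    | root =>
      obtain ⟨c, hc⟩ := hr hu b
      exact ⟨child b c (rootV n), hc, by simp, by simp⟩
    | mid => exact hu.elim
    | child b' c y =>
      obtain ⟨rfl, rfl⟩ := gtree_adj_mid_child.1 hvu
      rcases hroot _ c hu with hr | hc
      · exact ⟨root, hr, by simp, gtree_adj_root_mid.symm⟩
      · exact ⟨child b (!c) (rootV n), hc, by simp, by simp⟩
  | child b c x =>
    cases u with
    | root => exact absurd hvu.symm gtree_not_adj_root_child
    | mid => exact hu.elim
    | child b' c' y =>
      obtain ⟨rfl, rfl, hxy⟩ := gtree_adj_child_child.1 hvu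
      obtain ⟨w, hw, hwy, hxw⟩ := (hF b c ⟨y, hu⟩).2 x hv y hu hxy
      exact ⟨child b c w, hw, by simpa, gtree_adj_child_child.2 ⟨rfl, rfl, hxw⟩⟩

lemma disjoint_assemble {r : Prop} {F : Bool → Bool → Set (GV n)} {S : Set (GV (n + 1))}
    (hr : r → root ∉ S) (hF : ∀ b c, Disjoint (F b c) (child b c ⁻¹' S)) :
    Disjoint (assemble r F) S := by
  rw [Set.disjoint_left]
  intro v hv hvS
  cases v with
  | root => exact hr hv hvS
  | mid => exact hv
  | child b c x => exact (hF b c).notMem_of_mem_left hv hvS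

section Lifts

variable {S : Set (GV (n + 1))}

lemma exists_rootless_fort_of_copy (b c : Bool) {F : Set (GV n)} (hF : IsFort (Gtree n) F)
    (hFS : Disjoint F (child b c ⁻¹' S)) (hroot : rootV n ∉ F) :
    ∃ F, IsFort (Gtree (n + 1)) F ∧ Disjoint F S ∧ rootV (n + 1) ∉ F := by
  obtain ⟨x, hx⟩ := hF.1
  refine ⟨assemble False fun b' c' => {y | b' = b ∧ c' = c ∧ y ∈ F}, isFort_assemble ?_
    (fun h => h.elim) ?_ ⟨child b c x, rfl, rfl, hx⟩, disjoint_assemble (fun h => h.elim) ?_, id⟩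
  · rintro b' c' ⟨y, rfl, rfl, -⟩
    simpa using hF
  · rintro b' c' ⟨-, -, h⟩
    exact absurd h hroot
  · rintro b' c'
    rw [Set.disjoint_left]
    rintro y ⟨rfl, rfl, hy⟩
    exact hFS.notMem_of_mem_left hy

lemma exists_rootless_fort_of_siblings (b : Bool) {F : Bool → Set (GV n)}
    (hF : ∀ c, IsFort (Gtree n) (F c)) (hFS : ∀ c, Disjoint (F c) (child b c ⁻¹' S))
    (hroot : ∀ c, rootV n ∈ F c) :
    ∃ F, IsFort (Gtree (n + 1)) F ∧ Disjoint F S ∧ rootV (n + 1) ∉ F := by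
  refine ⟨assemble False fun b' c => {y | b' = b ∧ y ∈ F c}, isFort_assemble ?_
    (fun h => h.elim) ?_ ⟨child b false (rootV n), rfl, hroot false⟩,
    disjoint_assemble (fun h => h.elim) ?_, id⟩
  · rintro b' c ⟨y, rfl, -⟩
    simpa using hF c
  · rintro b' c ⟨rfl, -⟩
    exact Or.inr ⟨rfl, hroot _⟩
  · rintro b' c
    rw [Set.disjoint_left]
    rintro y ⟨rfl, hy⟩
    exact (hFS c).notMem_of_mem_left hy

lemma exists_fort_of_cousins (c : Bool → Bool) {F : Bool → Set (GV n)}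
    (hF : ∀ b, IsFort (Gtree n) (F b)) (hFS : ∀ b, Disjoint (F b) (child b (c b) ⁻¹' S))
    (hroot : ∀ b, rootV n ∈ F b) (hS : root ∉ S) :
    ∃ F, IsFort (Gtree (n + 1)) F ∧ Disjoint F S := by
  refine ⟨assemble True fun b c' => {y | c' = c b ∧ y ∈ F b}, isFort_assemble ?_
    (fun _ b => ⟨c b, rfl, hroot b⟩) (fun _ _ _ => Or.inl trivial) ⟨root, trivial⟩,
    disjoint_assemble (fun _ => hS) ?_⟩
  · rintro b c' ⟨y, rfl, -⟩
    simpa using hF b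
  · rintro b c'
    rw [Set.disjoint_left]
    rintro y ⟨rfl, hy⟩
    exact (hFS b).notMem_of_mem_left hy

end Lifts

section Step

variable {S : Set (GV (n + 1))}

lemma exists_rootless_fort_of_siblings_le
    (hQ : ∀ S : Set (GV n), S.ncard ≤ tseq n → ∃ F, IsFort (Gtree n) F ∧ Disjoint F S)
    (b : Bool) (h : ∀ c, (child b c ⁻¹' S).ncard ≤ tseq n) :
    ∃ F, IsFort (Gtree (n + 1)) F ∧ Disjoint F S ∧ rootV (n + 1) ∉ F := by
  choose F hF hFS using fun c => hQ _ (h c)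
  by_cases hroot : ∀ c, rootV n ∈ F c
  · exact exists_rootless_fort_of_siblings b hF hFS hroot
  · obtain ⟨c, hc⟩ := not_forall.1 hroot
    exact exists_rootless_fort_of_copy b c (hF c) (hFS c) hc

lemma exists_fort_of_cousins_le
    (hQ : ∀ S : Set (GV n), S.ncard ≤ tseq n → ∃ F, IsFort (Gtree n) F ∧ Disjoint F S)
    (c : Bool → Bool) (h : ∀ b, (child b (c b) ⁻¹' S).ncard ≤ tseq n) (hS : root ∉ S) :
    ∃ F, IsFort (Gtree (n + 1)) F ∧ Disjoint F S := by
  choose F hF hFS using fun b => hQ _ (h b)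
  by_cases hroot : ∀ b, rootV n ∈ F b
  · exact exists_fort_of_cousins c hF hFS hroot hS
  · obtain ⟨b, hb⟩ := not_forall.1 hroot
    obtain ⟨F', hF', hF'S, -⟩ := exists_rootless_fort_of_copy b (c b) (hF b) (hFS b) hb
    exact ⟨F', hF', hF'S⟩

end Step

lemma gtree_succ_exists_fort
    (hP : ∀ S : Set (GV n), S.ncard < tseq n →
      ∃ F, IsFort (Gtree n) F ∧ Disjoint F S ∧ rootV n ∉ F)
    (hQ : ∀ S : Set (GV n), S.ncard ≤ tseq n → ∃ F, IsFort (Gtree n) F ∧ Disjoint F S)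
    (S : Set (GV (n + 1))) :
    (S.ncard < tseq (n + 1) →
      ∃ F, IsFort (Gtree (n + 1)) F ∧ Disjoint F S ∧ rootV (n + 1) ∉ F) ∧
    (S.ncard ≤ tseq (n + 1) → ∃ F, IsFort (Gtree (n + 1)) F ∧ Disjoint F S) := by
  classical
  have hsum := sum_ncard_preimage_child_add_le S
  simp only [Fintype.sum_bool] at hsum
  have hrootless : (∃ b c, (child b c ⁻¹' S).ncard < tseq n) ∨
      (∃ b, ∀ c, (child b c ⁻¹' S).ncard ≤ tseq n) →
      ∃ F, IsFort (Gtree (n + 1)) F ∧ Disjoint F S ∧ rootV (n + 1) ∉ F := by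
    rintro (⟨b, c, h⟩ | ⟨b, h⟩)
    · obtain ⟨F, hF, hFS, hroot⟩ := hP _ h
      exact exists_rootless_fort_of_copy b c hF hFS hroot
    · exact exists_rootless_fort_of_siblings_le hQ b h
  simp only [Bool.exists_bool, Bool.forall_bool] at hrootless
  rw [tseq]
  refine ⟨fun hS => hrootless (by split_ifs at hsum <;> omega), fun hS => ?_⟩
  by_cases h : (∃ b c, (child b c ⁻¹' S).ncard < tseq n) ∨
      (∃ b, ∀ c, (child b c ⁻¹' S).ncard ≤ tseq n)
  · simp only [Bool.exists_bool, Bool.forall_bool] at h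
    obtain ⟨F, hF, hFS, -⟩ := hrootless h
    exact ⟨F, hF, hFS⟩
  simp only [Bool.exists_bool, Bool.forall_bool, not_or, not_and_or, not_lt] at h
  -- each side now holds at least `2 t + 1` vertices of `S`, exhausting the budget `4 t + 2`
  have hroot : root ∉ S := fun hr => by rw [if_pos hr] at hsum; omega
  rw [if_neg hroot] at hsum
  have hcousins : ∀ b, ∃ c, (child b c ⁻¹' S).ncard ≤ tseq n := by
    simp only [Bool.forall_bool, Bool.exists_bool]
    omega
  choose c hc using hcousins
  exact exists_fort_of_cousins_le hQ c hc hroot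

lemma gtree_zero_exists_fort (S : Set (GV 0)) :
    (S.ncard < tseq 0 → ∃ F, IsFort (Gtree 0) F ∧ Disjoint F S ∧ rootV 0 ∉ F) ∧
    (S.ncard ≤ tseq 0 → ∃ F, IsFort (Gtree 0) F ∧ Disjoint F S) := by
  have hcard : (baseIso ⁻¹' S).ncard = S.ncard :=
    Set.ncard_preimage_of_injective_subset_range baseIso.injective
      (by simp [baseIso.surjective.range_eq])
  obtain ⟨hP, hQ⟩ := subK4_exists_fort (baseIso ⁻¹' S)
  rw [hcard] at hP hQ
  refine ⟨fun hS => ?_, fun hS => ?_⟩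
  · obtain ⟨F, hF, hFS, h3⟩ := hP hS
    exact ⟨baseIso '' F, hF.image baseIso, Set.disjoint_image_left.2 hFS,
      fun h => h3 (baseIso.injective.mem_set_image.1 h)⟩
  · obtain ⟨F, hF, hFS⟩ := hQ hS
    exact ⟨baseIso '' F, hF.image baseIso, Set.disjoint_image_left.2 hFS⟩

theorem gtree_exists_fort (n : ℕ) (S : Set (GV n)) :
    (S.ncard < tseq n → ∃ F, IsFort (Gtree n) F ∧ Disjoint F S ∧ rootV n ∉ F) ∧
    (S.ncard ≤ tseq n → ∃ F, IsFort (Gtree n) F ∧ Disjoint F S) := by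
  induction n with
  | zero => exact gtree_zero_exists_fort S
  | succ n ih => exact gtree_succ_exists_fort (fun S => (ih S).1) (fun S => (ih S).2) S

@[simp] lemma hatGtree_adj_some_some {x y : GV n} :
    (hatGtree n).Adj (some x) (some y) ↔ (Gtree n).Adj x y := by
  simp [hatGtree, Gtree, hatAdj]

@[simp] lemma hatGtree_adj_none_some {x : GV n} :
    (hatGtree n).Adj none (some x) ↔ x = rootV n := by
  simp [hatGtree, hatAdj]

def hatLift (F : Set (GV n)) : Set (Option (GV n))
  | none => rootV n ∈ F
  | some x => x ∈ F

lemma isFort_hatLift {F : Set (GV n)} (hF : IsFort (Gtree n) F) :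
    IsFort (hatGtree n) (hatLift F) := by
  refine ⟨let ⟨x, hx⟩ := hF.1; ⟨some x, hx⟩, fun v hv u hu hvu => ?_⟩
  cases v with
  | none =>
    cases u with
    | none => exact absurd hvu (hatGtree n).irrefl
    | some y =>
      obtain rfl := hatGtree_adj_none_some.1 hvu
      exact absurd hu hv
  | some x =>
    cases u with
    | none =>
      obtain rfl := hatGtree_adj_none_some.1 hvu.symm
      exact absurd hu hv
    | some y =>
      obtain ⟨w, hw, hwy, hxw⟩ := hF.2 x hv y hu (hatGtree_adj_some_some.1 hvu)
      exact ⟨some w, hw, by simpa, hatGtree_adj_some_some.2 hxw⟩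

lemma disjoint_hatLift {F : Set (GV n)} {S : Set (Option (GV n))}
    (hFS : Disjoint F (some ⁻¹' S)) (hroot : rootV n ∈ F → none ∉ S) :
    Disjoint (hatLift F) S := by
  rw [Set.disjoint_left]
  intro v hv hvS
  cases v with
  | none => exact hroot hv hvS
  | some x => exact hFS.notMem_of_mem_left hv hvS

lemma hatGtree_exists_fort (S : Set (Option (GV n))) (hS : S.ncard ≤ tseq n) :
    ∃ F, IsFort (hatGtree n) F ∧ Disjoint F S := by
  classical
  have hcard := Set.ncard_preimage_some_add S
  by_cases hnone : none ∈ S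
  · rw [if_pos hnone] at hcard
    obtain ⟨F, hF, hFS, hroot⟩ := (gtree_exists_fort n (some ⁻¹' S)).1 (by omega)
    exact ⟨hatLift F, isFort_hatLift hF, disjoint_hatLift hFS (absurd · hroot)⟩
  · rw [if_neg hnone] at hcard
    obtain ⟨F, hF, hFS⟩ := (gtree_exists_fort n (some ⁻¹' S)).2 (by omega)
    exact ⟨hatLift F, isFort_hatLift hF, disjoint_hatLift hFS fun _ => hnone⟩

lemma three_mul_tseq_add_one (n : ℕ) : 3 * (tseq n + 1) = 8 * 4 ^ n + 1 := by
  induction n with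
  | zero => rfl
  | succ n ih => rw [tseq, pow_succ]; omega

lemma card_option_gv (n : ℕ) : Nat.card (Option (GV n)) = 6 * 4 ^ n := by
  rw [Nat.card_eq_fintype_card, Fintype.card_option, GV.card_add_one]

/-- `Z(Ĝ_{n+1}) ≥ t_{n+1} + 1`, hence `Z(Ĝ_{n+1}) ≥ (4/9)|V(Ĝ_{n+1})|`; more
precisely `Z(Ĝ_{n+1}) ≥ (4/9 + 1/(18 · 4^n)) |V(Ĝ_{n+1})|`. -/
theorem zeroForcingNumber_hatGtree_lower (n : ℕ) :
    tseq n + 1 ≤ zeroForcingNumber (hatGtree n) ∧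
    (4 / 9 : ℚ) * Nat.card (Option (GV n)) ≤ zeroForcingNumber (hatGtree n) ∧
    (4 / 9 + 1 / (18 * 4 ^ n) : ℚ) * Nat.card (Option (GV n)) ≤
      zeroForcingNumber (hatGtree n) := by
  have hZ : tseq n < zeroForcingNumber (hatGtree n) :=
    lt_zeroForcingNumber_of_exists_fort fun S => hatGtree_exists_fort S
  have hZℚ : (tseq n + 1 : ℚ) ≤ zeroForcingNumber (hatGtree n) := by exact_mod_cast hZ
  have ht : (3 * (tseq n + 1) : ℚ) = 8 * 4 ^ n + 1 := by
    exact_mod_cast three_mul_tseq_add_one n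
  have hsharp : (4 / 9 + 1 / (18 * 4 ^ n) : ℚ) * Nat.card (Option (GV n)) = tseq n + 1 := by
    rw [card_option_gv]
    push_cast
    field_simp
    linarith
  have hcorr : (0 : ℚ) ≤ 1 / (18 * 4 ^ n) * Nat.card (Option (GV n)) := by positivity
  refine ⟨hZ, ?_, hsharp ▸ hZℚ⟩
  linarith [add_mul (4 / 9 : ℚ) (1 / (18 * 4 ^ n)) (Nat.card (Option (GV n)))]
end

section
/- With G_n and t_n as in the binary-tree construction: there exists a zero forcing set P_n of G_n with |P_n| = t_n + 1 such that r_n ∈ P_n and the zero forcing process can complete without the root r_n ever performing a force (i.e., P_n \ {r_n} together with r_n being black, but r_n never forcing, still colors all of G_n black). -/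
/-- Zero forcing closure in which the distinguished vertex `a` is never allowed to
perform a force. -/
inductive ZFClosureAvoiding {V : Type*} (G : SimpleGraph V) (S : Set V) (a : V) : V → Prop
  | init (v : V) : v ∈ S → ZFClosureAvoiding G S a v
  | force (u v : V) : v ≠ a → G.Adj v u → ZFClosureAvoiding G S a v →
      (∀ w, G.Adj v w → w ≠ u → ZFClosureAvoiding G S a w) → ZFClosureAvoiding G S a u

instance instFinGV (n : ℕ) : Finite (GV n) := by
  induction n with
  | zero =>
      exact Finite.of_injective (fun v : GV 0 => match v with | .base i => i)
        (by rintro ⟨i⟩ ⟨j⟩ h; simpa using h)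
  | succ n ih =>
      haveI := ih
      exact Finite.of_injective (fun v : GV (n+1) => match v with
          | .root => (Sum.inl () : Unit ⊕ Bool ⊕ Bool × Bool × GV n)
          | .mid b => Sum.inr (.inl b)
          | .child b c x => Sum.inr (.inr (b, c, x)))
        (by rintro (_|b|⟨b,c,x⟩) (_|b'|⟨b',c',y⟩) h <;> simp_all)

lemma child_inj {n : ℕ} (b c : Bool) :
    Function.Injective (fun x : GV n => GV.child b c x) := by
  intro x y h; simpa using h

lemma childAdj {n : ℕ} {b c : Bool} {x y : GV n} (h : (Gtree n).Adj x y) :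
    (Gtree (n+1)).Adj (GV.child b c x) (GV.child b c y) := by
  rw [Gtree, SimpleGraph.fromRel_adj] at h ⊢
  obtain ⟨hne, h⟩ := h
  refine ⟨by simp [hne], ?_⟩
  rcases h with h | h
  · exact Or.inl ⟨rfl, rfl, h⟩
  · exact Or.inr ⟨rfl, rfl, h⟩

lemma adj_child_cases {n : ℕ} {b c : Bool} {x : GV n} {z : GV (n+1)}
    (h : (Gtree (n+1)).Adj (GV.child b c x) z) :
    (∃ y, z = GV.child b c y ∧ (Gtree n).Adj x y) ∨ (x = rootV n ∧ z = GV.mid b) := by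
  rw [Gtree, SimpleGraph.fromRel_adj] at h
  obtain ⟨hne, h | h⟩ := h
  · cases z with
    | root => exact False.elim h
    | mid b' => exact False.elim h
    | child b' c' y =>
        obtain ⟨hb, hc, hxy⟩ : b = b' ∧ c = c' ∧ gAdj x y := h
        subst hb; subst hc
        refine Or.inl ⟨y, rfl, ?_⟩
        rw [Gtree, SimpleGraph.fromRel_adj]
        exact ⟨fun e => hne (by rw [e]), Or.inl hxy⟩
  · cases z with
    | root => exact False.elim h
    | mid b' =>
        obtain ⟨hb, hx⟩ : b' = b ∧ x = rootV n := h
        subst hb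
        exact Or.inr ⟨hx, rfl⟩
    | child b' c' y =>
        obtain ⟨hb, hc, hyx⟩ : b' = b ∧ c' = c ∧ gAdj y x := h
        subst hb; subst hc
        refine Or.inl ⟨y, rfl, ?_⟩
        rw [Gtree, SimpleGraph.fromRel_adj]
        exact ⟨fun e => hne (by rw [e]), Or.inr hyx⟩

lemma adj_mid_cases {n : ℕ} {b : Bool} {z : GV (n+1)}
    (h : (Gtree (n+1)).Adj (GV.mid b) z) :
    z = GV.root ∨ ∃ c, z = GV.child b c (rootV n) := by
  rw [Gtree, SimpleGraph.fromRel_adj] at h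
  obtain ⟨hne, h | h⟩ := h
  · cases z with
    | root => exact Or.inl rfl
    | mid b' => exact False.elim h
    | child b' c y =>
        obtain ⟨hb, hy⟩ : b = b' ∧ y = rootV n := h
        subst hb; subst hy
        exact Or.inr ⟨c, rfl⟩
  · cases z with
    | root => exact Or.inl rfl
    | mid b' => exact False.elim h
    | child b' c y => exact False.elim h

lemma adj_root_mid {n : ℕ} (b : Bool) : (Gtree (n+1)).Adj GV.root (GV.mid b) := by
  rw [Gtree, SimpleGraph.fromRel_adj]
  exact ⟨by simp, Or.inl trivial⟩

lemma adj_mid_child {n : ℕ} (b c : Bool) :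
    (Gtree (n+1)).Adj (GV.mid b) (GV.child b c (rootV n)) := by
  rw [Gtree, SimpleGraph.fromRel_adj]
  exact ⟨by simp, Or.inl ⟨rfl, rfl⟩⟩

lemma lift_closure {n : ℕ} {S : Set (GV n)} {T : Set (GV (n+1))} {b c : Bool}
    (hinit : ∀ x ∈ S, ZFClosureAvoiding (Gtree (n+1)) T GV.root (GV.child b c x)) :
    ∀ x, ZFClosureAvoiding (Gtree n) S (rootV n) x →
      ZFClosureAvoiding (Gtree (n+1)) T GV.root (GV.child b c x) := by
  intro x h
  induction h with
  | init v hv => exact hinit v hv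
  | force u v hv hadj hvcl hwcl ihv ihw =>
      refine .force _ (GV.child b c v) (by simp) (childAdj hadj) ihv ?_
      intro w hw hwne
      rcases adj_child_cases hw with ⟨y, rfl, hy⟩ | ⟨hveq, _⟩
      · exact ihw y hy (fun e => hwne (by rw [e]))
      · exact absurd hveq hv

lemma base_adj_iff (i j : Fin 5) :
    (Gtree 0).Adj (GV.base i) (GV.base j) ↔ i ≠ j ∧ (subK4Rel i j ∨ subK4Rel j i) := by
  rw [Gtree, SimpleGraph.fromRel_adj]
  constructor
  · rintro ⟨h1, h2⟩; exact ⟨fun e => h1 (by rw [e]), h2⟩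
  · rintro ⟨h1, h2⟩; exact ⟨by simp [h1], h2⟩

/-- There is a zero forcing set `P` of `G_{n+1}` of size `t_{n+1} + 1` containing the
root `r_{n+1}`, for which the forcing process colors all of `G_{n+1}` black without
the root ever performing a force. -/
theorem exists_zeroForcingSet_root_not_forcing (n : ℕ) :
    ∃ P : Set (GV n), P.ncard = tseq n + 1 ∧ rootV n ∈ P ∧
      ∀ v, ZFClosureAvoiding (Gtree n) P (rootV n) v := by
  induction n with
  | zero =>
      refine ⟨{GV.base 3, GV.base 0, GV.base 2}, ?_, ?_, ?_⟩
      · rw [Set.ncard_insert_of_notMem (by simp), Set.ncard_insert_of_notMem (by simp),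
          Set.ncard_singleton]
        rfl
      · simp [rootV]
      · set P : Set (GV 0) := {GV.base 3, GV.base 0, GV.base 2} with hP
        have c3 : ZFClosureAvoiding (Gtree 0) P (rootV 0) (GV.base 3) := .init _ (by simp [hP])
        have c0 : ZFClosureAvoiding (Gtree 0) P (rootV 0) (GV.base 0) := .init _ (by simp [hP])
        have c2 : ZFClosureAvoiding (Gtree 0) P (rootV 0) (GV.base 2) := .init _ (by simp [hP])
        have hne03 : (GV.base 0 : GV 0) ≠ rootV 0 := by simp [rootV]
        have hne23 : (GV.base 2 : GV 0) ≠ rootV 0 := by simp [rootV]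
        have c4 : ZFClosureAvoiding (Gtree 0) P (rootV 0) (GV.base 4) := by
          refine .force _ (GV.base 0) hne03 ((base_adj_iff 0 4).2 (by unfold subK4Rel; decide)) c0 ?_
          rintro ⟨j⟩ hw hwne
          rw [base_adj_iff] at hw
          have hj : j = 3 ∨ j = 2 ∨ j = 4 := by
            have h2 := hw.2
            clear hw hwne
            revert h2; unfold subK4Rel; revert j; decide
          rcases hj with rfl | rfl | rfl
          · exact c3
          · exact c2
          · exact absurd rfl hwne
        have c1 : ZFClosureAvoiding (Gtree 0) P (rootV 0) (GV.base 1) := by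
          refine .force _ (GV.base 2) hne23 ((base_adj_iff 2 1).2 (by unfold subK4Rel; decide)) c2 ?_
          rintro ⟨j⟩ hw hwne
          rw [base_adj_iff] at hw
          have hj : j = 0 ∨ j = 4 ∨ j = 1 := by
            have h2 := hw.2
            clear hw hwne
            revert h2; unfold subK4Rel; revert j; decide
          rcases hj with rfl | rfl | rfl
          · exact c0
          · exact c4
          · exact absurd rfl hwne
        rintro ⟨j⟩
        fin_cases j
        · exact c0
        · exact c1
        · exact c2
        · exact c3
        · exact c4
  | succ n ih =>
      obtain ⟨P, hcard, hroot, hforce⟩ := ih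
      set Q : Set (GV n) := P \ {rootV n} with hQdef
      set T : Set (GV (n+1)) :=
        insert GV.root (((fun x => GV.child true true x) '' P) ∪
          ((fun x => GV.child true false x) '' Q) ∪
          ((fun x => GV.child false true x) '' P) ∪
          ((fun x => GV.child false false x) '' Q)) with hT
      have hQcard : Q.ncard = tseq n := by
        rw [hQdef, Set.ncard_diff_singleton_of_mem hroot, hcard]
        simp
      have hdisj : ∀ (b c b' c' : Bool), (b, c) ≠ (b', c') → ∀ (A B : Set (GV n)),
          Disjoint ((fun x => GV.child b c x) '' A) ((fun x => GV.child b' c' x) '' B) := by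
        intro b c b' c' hbc A B
        rw [Set.disjoint_left]
        rintro z ⟨x, hx, rfl⟩ ⟨y, hy, hz⟩
        simp only at hz
        obtain ⟨hb, hc, -⟩ : b' = b ∧ c' = c ∧ y = x := by simpa using hz
        exact hbc (by rw [hb, hc])
      have himg : ∀ (b c : Bool) (A : Set (GV n)),
          ((fun x => GV.child b c x) '' A).ncard = A.ncard :=
        fun b c A => Set.ncard_image_of_injective _ (child_inj b c)
      have hTcard : T.ncard = tseq (n+1) + 1 := by
        rw [hT, Set.ncard_insert_of_notMem (by simp)]
        rw [Set.ncard_union_eq (by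
            simp only [Set.disjoint_union_left]
            exact ⟨⟨hdisj _ _ _ _ (by simp) _ _, hdisj _ _ _ _ (by simp) _ _⟩,
              hdisj _ _ _ _ (by simp) _ _⟩)]
        rw [Set.ncard_union_eq (by
            simp only [Set.disjoint_union_left]
            exact ⟨hdisj _ _ _ _ (by simp) _ _, hdisj _ _ _ _ (by simp) _ _⟩)]
        rw [Set.ncard_union_eq (hdisj _ _ _ _ (by simp) _ _)]
        rw [himg, himg, himg, himg, hcard, hQcard]
        show tseq n + 1 + tseq n + (tseq n + 1) + tseq n + 1 = (4 * tseq n + 2) + 1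
        ring
      refine ⟨T, hTcard, by simp [hT, rootV], ?_⟩
      have hrootT : ZFClosureAvoiding (Gtree (n+1)) T GV.root GV.root := .init _ (by simp [hT])
      -- copies (b, true) are fully in T
      have hA : ∀ (b : Bool) (x : GV n),
          ZFClosureAvoiding (Gtree (n+1)) T GV.root (GV.child b true x) := by
        intro b x
        refine lift_closure (fun y hy => .init _ ?_) x (hforce x)
        cases b <;> simp [hT] <;> exact hy
      -- the middle vertices get forced by the roots of the (b, true) copies
      have hmid : ∀ b : Bool, ZFClosureAvoiding (Gtree (n+1)) T GV.root (GV.mid b) := by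
        intro b
        refine .force _ (GV.child b true (rootV n)) (by simp)
          ((Gtree (n+1)).adj_symm (adj_mid_child b true)) (hA b _) ?_
        intro w hw hwne
        rcases adj_child_cases hw with ⟨y, rfl, hy⟩ | ⟨-, rfl⟩
        · exact hA b y
        · exact absurd rfl hwne
      -- the middle vertices force the roots of the (b, false) copies
      have hcr : ∀ b : Bool,
          ZFClosureAvoiding (Gtree (n+1)) T GV.root (GV.child b false (rootV n)) := by
        intro b
        refine .force _ (GV.mid b) (by simp) (adj_mid_child b false) (hmid b) ?_
        intro w hw hwne
        rcases adj_mid_cases hw with rfl | ⟨c, rfl⟩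
        · exact hrootT
        · cases c with
          | true => exact hA b _
          | false => exact absurd rfl hwne
      have hB : ∀ (b : Bool) (x : GV n),
          ZFClosureAvoiding (Gtree (n+1)) T GV.root (GV.child b false x) := by
        intro b x
        refine lift_closure (fun y hy => ?_) x (hforce x)
        by_cases hy3 : y = rootV n
        · subst hy3; exact hcr b
        · refine .init _ ?_
          have hyQ : y ∈ Q := ⟨hy, by simp [hy3]⟩
          cases b <;> simp [hT] <;> exact hyQ
      intro v
      cases v with
      | root => exact hrootT
      | mid b => exact hmid b
      | child b c x =>
          cases c with
          | true => exact hA b x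
          | false => exact hB b x
end
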